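/- Let X be a real or complex linear space endowed with a seminorm ‖·‖ and let 1 < p < ∞. Suppose a series ∑_{k=0}^∞ u_k with terms in X is (C,1) summable to S ∈ X with respect to the seminorm (i.e., ‖σ_n − S‖ → 0) and that ∑_{k=n+1}^∞ ‖u_k‖^p = O(1/n^{p-1}) as n → ∞. Then ‖S_n − S‖ → 0 as n → ∞. -/

import Mathlib

open Filter Finset Topology

/-!
Write `τ_m = (m + 1)(σ_m - S) = ∑_{i ≤ m} (S_i - S)`. For every `d`,
`d (S_n - S) = τ_{n+d} - τ_n - ∑_{j < d} (S_{n+1+j} - S_n)`.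
Cesàro summability says `τ_m = o(m)`, so for `d ≈ δ n` the first two terms are `o(d)`.
By Hölder's inequality and the tail bound, whenever `d ≤ δ n`,
`‖S_{n+d} - S_n‖ ^ p ≤ d ^ (p-1) M / n ^ (p-1) ≤ δ ^ (p-1) M`: the partial sums oscillate
slowly, which bounds the last sum by `d ε`.
-/

noncomputable def cesaroMean {X : Type*} [AddCommGroup X] [Module ℝ X] (s : ℕ → X) (n : ℕ) : X :=
  ((n : ℝ) + 1)⁻¹ • ∑ i ∈ range (n + 1), s i

def SlowlyOscillating {X : Type*} [SeminormedAddCommGroup X] (s : ℕ → X) : Prop :=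
  ∀ ε > 0, ∃ δ > 0, ∀ᶠ n : ℕ in atTop, ∀ d : ℕ, (d : ℝ) ≤ δ * n → ‖s (n + d) - s n‖ ≤ ε

theorem add_one_smul_cesaroMean_sub {X : Type*} [AddCommGroup X] [Module ℝ X] (s : ℕ → X)
    (S : X) (n : ℕ) :
    ((n : ℝ) + 1) • (cesaroMean s n - S) = ∑ i ∈ range (n + 1), (s i - S) := by
  have hn : (n : ℝ) + 1 ≠ 0 := by positivity
  rw [cesaroMean, smul_sub, smul_smul, mul_inv_cancel₀ hn, one_smul, sum_sub_distrib, sum_const,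
    card_range, ← Nat.cast_smul_eq_nsmul ℝ, Nat.cast_succ]

theorem smul_sub_eq_cesaroMean_sub {X : Type*} [AddCommGroup X] [Module ℝ X] (s : ℕ → X)
    (S : X) (n d : ℕ) :
    (d : ℝ) • (s n - S) = ((n + d : ℕ) + 1 : ℝ) • (cesaroMean s (n + d) - S)
      - ((n : ℝ) + 1) • (cesaroMean s n - S) - ∑ j ∈ range d, (s (n + 1 + j) - s n) := by
  rw [add_one_smul_cesaroMean_sub, add_one_smul_cesaroMean_sub,
    show n + d + 1 = n + 1 + d by ring, sum_range_add, add_sub_cancel_left, ← sum_sub_distrib]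
  simp only [sub_sub_sub_cancel_left, sum_const, card_range, Nat.cast_smul_eq_nsmul]

theorem mul_norm_sub_le_of_cesaroMean {X : Type*} [SeminormedAddCommGroup X] [NormedSpace ℝ X]
    {s : ℕ → X} (S : X) {n d : ℕ} {ε : ℝ} (hosc : ∀ j < d, ‖s (n + 1 + j) - s n‖ ≤ ε) :
    d * ‖s n - S‖ ≤ ((n + d : ℕ) + 1) * ‖cesaroMean s (n + d) - S‖
      + ((n : ℝ) + 1) * ‖cesaroMean s n - S‖ + d * ε := by
  have hsum : ‖∑ j ∈ range d, (s (n + 1 + j) - s n)‖ ≤ d * ε := by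
    simpa using norm_sum_le_of_le (range d) fun j hj => hosc j (mem_range.1 hj)
  calc (d : ℝ) * ‖s n - S‖ = ‖(d : ℝ) • (s n - S)‖ := by rw [norm_smul, Real.norm_natCast]
    _ ≤ _ := by
      rw [smul_sub_eq_cesaroMean_sub]
      refine (norm_sub_le _ _).trans (add_le_add ((norm_sub_le _ _).trans_eq ?_) hsum)
      rw [norm_smul, norm_smul, Real.norm_of_nonneg (by positivity),
        Real.norm_of_nonneg (by positivity)]

theorem tendsto_norm_sub_of_cesaroMean_of_slowlyOscillating {X : Type*}
    [SeminormedAddCommGroup X] [NormedSpace ℝ X] {s : ℕ → X} {S : X}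
    (hσ : Tendsto (fun n => ‖cesaroMean s n - S‖) atTop (𝓝 0)) (hs : SlowlyOscillating s) :
    Tendsto (fun n => ‖s n - S‖) atTop (𝓝 0) := by
  refine tendsto_order.2 ⟨fun a ha => .of_forall fun n => ha.trans_le (norm_nonneg _),
    fun ε₂ hε₂ => ?_⟩
  obtain ⟨ε, hε, hεε₂⟩ : ∃ ε > 0, 2 * ε < ε₂ := ⟨ε₂ / 4, by positivity, by linarith⟩
  obtain ⟨δ, hδ, hosc⟩ := hs ε hε
  -- with `d ≈ δ n`, the Cesàro errors at `n` and `n + d` contribute at most `(4 + δ) n η = δ n ε / 2 ≤ d ε`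
  set η := δ * ε / (2 * (4 + δ)) with hη_def
  have hη : 0 < η := by positivity
  obtain ⟨N, hN⟩ := eventually_atTop.1 (hσ.eventually (gt_mem_nhds hη))
  filter_upwards [hosc, eventually_ge_atTop N, eventually_ge_atTop 1,
    tendsto_natCast_atTop_atTop.eventually_ge_atTop (2 / δ)] with n hosc_n hnN hn1 hnδ
  set d := ⌊δ * n⌋₊
  have hdδ : (d : ℝ) ≤ δ * n := Nat.floor_le (by positivity)
  have hδd : δ * n < d + 1 := Nat.lt_floor_add_one _
  have hδn : 2 ≤ δ * n := by rwa [div_le_iff₀ hδ, mul_comm] at hnδ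
  have hd : (0 : ℝ) < d := by linarith
  have hn1' : (1 : ℝ) ≤ n := by exact_mod_cast hn1
  have hosc' : ∀ j < d, ‖s (n + 1 + j) - s n‖ ≤ ε := fun j hj => by
    rw [add_assoc]
    exact hosc_n (1 + j) (le_trans (by exact_mod_cast (by omega : 1 + j ≤ d)) hdδ)
  have key := mul_norm_sub_le_of_cesaroMean S hosc'
  have hA := (hN (n + d) (by omega)).le
  have hB := (hN n hnN).le
  have hηn : (4 + δ) * n * η = δ * n * ε / 2 := by rw [hη_def]; field_simp
  push_cast at key
  have hbound : d * ‖s n - S‖ ≤ d * (2 * ε) := by nlinarith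
  exact (le_of_mul_le_mul_left hbound hd).trans_lt hεε₂

theorem rpow_sum_range_le_mul_tsum_rpow {f : ℕ → ℝ} (hf : ∀ k, 0 ≤ f k) {p : ℝ} (hp : 1 ≤ p)
    (hfp : Summable fun k => f k ^ p) (d : ℕ) :
    (∑ k ∈ range d, f k) ^ p ≤ (d : ℝ) ^ (p - 1) * ∑' k, f k ^ p := by
  have hsum := hfp.sum_le_tsum (range d) fun k _ => Real.rpow_nonneg (hf k) p
  simpa using (Real.rpow_sum_le_const_mul_sum_rpow_of_nonneg (range d) hp fun k _ => hf k).trans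
    (mul_le_mul_of_nonneg_left hsum (by positivity))

theorem exists_pos_rpow_mul_le {r : ℝ} (hr : 0 < r) (M : ℝ) {c : ℝ} (hc : 0 < c) :
    ∃ δ > 0, δ ^ r * M ≤ c := by
  have h : Tendsto (fun δ : ℝ => δ ^ r * M) (𝓝[>] 0) (𝓝 0) := by
    simpa [Real.zero_rpow hr.ne'] using
      ((Real.continuousAt_rpow_const 0 r (Or.inr hr.le)).tendsto.mul_const M).mono_left
        nhdsWithin_le_nhds
  exact ((h.eventually (ge_mem_nhds hc)).and self_mem_nhdsWithin).exists.imp fun δ h => ⟨h.2, h.1⟩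

theorem norm_sum_range_add_sub_le {X : Type*} [SeminormedAddCommGroup X] (u : ℕ → X) (n d : ℕ) :
    ‖∑ k ∈ range (n + d + 1), u k - ∑ k ∈ range (n + 1), u k‖ ≤ ∑ j ∈ range d, ‖u (n + 1 + j)‖ := by
  rw [show n + d + 1 = n + 1 + d by ring, sum_range_add, add_sub_cancel_left]
  exact norm_sum_le _ _

theorem slowlyOscillating_partialSums_of_tail_rpow_le {X : Type*} [SeminormedAddCommGroup X]
    {u : ℕ → X} {p M : ℝ} {n₀ : ℕ} (hp : 1 < p) (hu : Summable fun k => ‖u k‖ ^ p)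
    (htail : ∀ n, n₀ ≤ n → ∑' k, ‖u (n + 1 + k)‖ ^ p ≤ M / (n : ℝ) ^ (p - 1)) :
    SlowlyOscillating fun n => ∑ k ∈ range (n + 1), u k := by
  intro ε hε
  obtain ⟨δ, hδ, hδM⟩ := exists_pos_rpow_mul_le (sub_pos.2 hp) M (by positivity : 0 < ε ^ p)
  refine ⟨δ, hδ, ?_⟩
  filter_upwards [eventually_ge_atTop n₀, eventually_gt_atTop 0] with n hn₀ hn d hd
  have hn' : (0 : ℝ) < n := by exact_mod_cast hn
  have hu' : Summable fun k => ‖u (n + 1 + k)‖ ^ p :=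
    ((summable_nat_add_iff (n + 1)).2 hu).congr fun k => by rw [add_comm k]
  set T := ∑ j ∈ range d, ‖u (n + 1 + j)‖
  have hTp : T ^ p ≤ ε ^ p := calc
    T ^ p ≤ (d : ℝ) ^ (p - 1) * ∑' k, ‖u (n + 1 + k)‖ ^ p :=
      rpow_sum_range_le_mul_tsum_rpow (fun _ => norm_nonneg _) hp.le hu' d
    _ ≤ (δ * n) ^ (p - 1) * (M / (n : ℝ) ^ (p - 1)) := by
      gcongr
      exact htail n hn₀
    _ = δ ^ (p - 1) * M := by
      rw [Real.mul_rpow hδ.le hn'.le]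
      field_simp
    _ ≤ ε ^ p := hδM
  exact (norm_sum_range_add_sub_le u n d).trans
    ((Real.rpow_le_rpow_iff (by positivity) hε.le (by linarith)).1 hTp)

theorem tauberian_cesaro_tail_bigO_seminorm_general
    {X : Type*} [SeminormedAddCommGroup X] [NormedSpace ℝ X]
    (u : ℕ → X) (S : X) (p : ℝ) (hp : 1 < p)
    (hC1 : Tendsto (fun n : ℕ =>
        ‖((n : ℝ) + 1)⁻¹ • (∑ i ∈ range (n + 1), ∑ k ∈ range (i + 1), u k) - S‖)
      atTop (𝓝 0))
    (hSummable : Summable fun k : ℕ => ‖u k‖ ^ p)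
    (M : ℝ) (n₀ : ℕ)
    (htail : ∀ n : ℕ, n₀ ≤ n →
        (∑' k : ℕ, ‖u (n + 1 + k)‖ ^ p) ≤ M / (n : ℝ) ^ (p - 1)) :
    Tendsto (fun n : ℕ => ‖(∑ k ∈ range (n + 1), u k) - S‖) atTop (𝓝 0) :=
  tendsto_norm_sub_of_cesaroMean_of_slowlyOscillating hC1
    (slowlyOscillating_partialSums_of_tail_rpow_le hp hSummable htail)

/-- **The Tauberian theorem for seminormed spaces** (Remark 1). Let `X` be a real or complex
linear space endowed with a seminorm and `1 < p < ∞`. If a series `∑ u_k` in `X` is `(C,1)`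
summable to `S ∈ X` with respect to the seminorm (i.e. `‖σ_n - S‖ → 0`) and its tails satisfy
`∑_{k=n+1}^∞ ‖u_k‖^p = O(1/n^{p-1})`, then `‖S_n - S‖ → 0` as `n → ∞`. -/
theorem tauberian_cesaro_tail_bigO_seminorm
    {X : Type*} [SeminormedAddCommGroup X] [NormedSpace ℝ X]
    (u : ℕ → X) (S : X) (p : ℝ) (hp : 1 < p)
    (hC1 : Tendsto (fun n : ℕ =>
        ‖((n : ℝ) + 1)⁻¹ • (∑ i ∈ range (n + 1), ∑ k ∈ range (i + 1), u k) - S‖)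
      atTop (𝓝 0))
    (hSummable : Summable fun k : ℕ => ‖u k‖ ^ p)
    (M : ℝ) (hM : 0 < M) (n₀ : ℕ)
    (htail : ∀ n : ℕ, n₀ ≤ n →
        (∑' k : ℕ, ‖u (n + 1 + k)‖ ^ p) ≤ M / (n : ℝ) ^ (p - 1)) :
    Tendsto (fun n : ℕ => ‖(∑ k ∈ range (n + 1), u k) - S‖) atTop (𝓝 0) :=
  tauberian_cesaro_tail_bigO_seminorm_general u S p hp hC1 hSummable M n₀ htail
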